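/- arXiv:2504.17637 — 2 statements merged into one kernel-verified Lean document; each statement's English description precedes it below -/
import Mathlib

section
/- Let β ∈ B_3 with inf(β) ≤ −1. (i) If inf(β) < 0 < sup(β), then nb(β) = |inf(β)|. (ii) If inf(β) < sup(β) ≤ 0, then nb(β) = −writhe(β) = |inf(β)| + |sup(β)|. -/
/-- The braid relations on the free group on `n - 1` Artin generators. -/
def braidRels (n : ℕ) : Set (FreeGroup (Fin (n - 1))) :=
  { r | (∃ i j : Fin (n - 1), (i : ℕ) + 1 < (j : ℕ) ∧
          r = FreeGroup.of i * FreeGroup.of j * (FreeGroup.of i)⁻¹ * (FreeGroup.of j)⁻¹) ∨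
        (∃ i j : Fin (n - 1), (i : ℕ) + 1 = (j : ℕ) ∧
          r = FreeGroup.of i * FreeGroup.of j * FreeGroup.of i *
              (FreeGroup.of j * FreeGroup.of i * FreeGroup.of j)⁻¹) }

/-- The braid group `B_n`, presented with Artin generators `σ_1, …, σ_{n-1}`. -/
abbrev BraidGroup (n : ℕ) := PresentedGroup (braidRels n)

/-- The Artin generator `σ_k` (1-indexed; junk value `1` if `k` is out of range). -/
noncomputable def sigma (n : ℕ) (k : ℕ) : BraidGroup n :=
  if h : k - 1 < n - 1 then PresentedGroup.of (⟨k - 1, h⟩ : Fin (n - 1)) else 1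

/-- The band generator `a_{i,j} = (σ_{j-1}⋯σ_{i+1}) σ_i (σ_{j-1}⋯σ_{i+1})⁻¹`. -/
noncomputable def band (n i j : ℕ) : BraidGroup n :=
  (((List.range' (i + 1) (j - 1 - i)).reverse.map (sigma n)).prod) * sigma n i *
    (((List.range' (i + 1) (j - 1 - i)).reverse.map (sigma n)).prod)⁻¹

/-- The set of band generators `a_{i,j}`, `1 ≤ i < j ≤ n`. -/
def Bands (n : ℕ) : Set (BraidGroup n) :=
  { b | ∃ i j : ℕ, 1 ≤ i ∧ i < j ∧ j ≤ n ∧ b = band n i j }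

/-- The monoid `SQP(n)` of strongly quasipositive braids. -/
def SQP (n : ℕ) : Submonoid (BraidGroup n) := Submonoid.closure (Bands n)

/-- `δ = σ_{n-1} σ_{n-2} ⋯ σ_1`. -/
noncomputable def bdelta (n : ℕ) : BraidGroup n :=
  (((List.range' 1 (n - 1)).reverse.map (sigma n)).prod)

/-- The partial order `V ≤ W` iff `W = P V Q` with `P, Q ∈ SQP(n)`. -/
def bble (n : ℕ) (V W : BraidGroup n) : Prop :=
  ∃ P ∈ SQP n, ∃ Q ∈ SQP n, W = P * V * Q

/-- `inf(β) = max { r : δ^r ≤ β }`. -/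
noncomputable def binf (n : ℕ) (β : BraidGroup n) : ℤ :=
  sSup { r : ℤ | bble n (bdelta n ^ r) β }

/-- `sup(β) = min { s : β ≤ δ^s }`. -/
noncomputable def bsup (n : ℕ) (β : BraidGroup n) : ℤ :=
  sInf { s : ℤ | bble n β (bdelta n ^ s) }

/-- The canonical length `ℓ(β) = sup(β) - inf(β)`. -/
noncomputable def ell (n : ℕ) (β : BraidGroup n) : ℤ := bsup n β - binf n β

/-- A letter `(i, j, ε)` stands for `a_{i,j}` if `ε = true` and `a_{i,j}⁻¹` if `ε = false`. -/
noncomputable def evalLetter (n : ℕ) (l : ℕ × ℕ × Bool) : BraidGroup n :=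
  if l.2.2 then band n l.1 l.2.1 else (band n l.1 l.2.1)⁻¹

/-- A band-generator word: every letter indexes an honest band generator. -/
def IsWord (n : ℕ) (W : List (ℕ × ℕ × Bool)) : Prop :=
  ∀ l ∈ W, 1 ≤ l.1 ∧ l.1 < l.2.1 ∧ l.2.1 ≤ n

/-- `W` represents the braid `β`. -/
def Represents (n : ℕ) (W : List (ℕ × ℕ × Bool)) (β : BraidGroup n) : Prop :=
  IsWord n W ∧ (W.map (evalLetter n)).prod = β

/-- The number of negative bands in the word `W`. -/
def nbWord (W : List (ℕ × ℕ × Bool)) : ℕ := (W.filter fun l => !l.2.2).length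

/-- The negative band number `nb(β)` of a braid. -/
noncomputable def nb (n : ℕ) (β : BraidGroup n) : ℕ :=
  sInf { m : ℕ | ∃ W, Represents n W β ∧ nbWord W = m }

/-- The negative band number `nb([β])` of a conjugacy class. -/
noncomputable def nbConj (n : ℕ) (β : BraidGroup n) : ℕ :=
  sInf { m : ℕ | ∃ β' : BraidGroup n, IsConj β β' ∧ nb n β' = m }

/-- The minimal band-generator word length `‖β‖`. -/
noncomputable def wordLen (n : ℕ) (β : BraidGroup n) : ℕ :=
  sInf { m : ℕ | ∃ W, Represents n W β ∧ W.length = m }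

/-- The minimal length of a positive band-generator word representing `A`. -/
noncomputable def posLen (n : ℕ) (A : BraidGroup n) : ℕ :=
  sInf { m : ℕ | ∃ W, Represents n W A ∧ (∀ l ∈ W, l.2.2 = true) ∧ W.length = m }

/-- Canonical factors: `e ≤ A ≤ δ`. -/
def CnFct (n : ℕ) : Set (BraidGroup n) :=
  { A | bble n 1 A ∧ bble n A (bdelta n) }

/-- `A ≺ B` iff `B = A Q` for a canonical factor `Q`. -/
def prec (n : ℕ) (A B : BraidGroup n) : Prop :=
  ∃ Q ∈ CnFct n, B = A * Q

/-- `A B` is maximally left-weighted. -/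
def MLW (n : ℕ) (A B : BraidGroup n) : Prop :=
  ¬ ∃ A' ∈ CnFct n, ∃ B' ∈ CnFct n, A * B = A' * B' ∧ prec n A A' ∧ A ≠ A'

/-- `β = δ^r A_1 ⋯ A_k` is a left-canonical factorization. -/
def IsLCF (n : ℕ) (β : BraidGroup n) (r : ℤ) (A : List (BraidGroup n)) : Prop :=
  β = bdelta n ^ r * A.prod ∧
  (∀ X ∈ A, X ∈ CnFct n ∧ X ≠ 1 ∧ X ≠ bdelta n) ∧
  A.Chain' (MLW n)

/-- The super summit set `SSS([β])`: conjugates of `β` of minimal canonical length. -/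
def SSS (n : ℕ) (β : BraidGroup n) : Set (BraidGroup n) :=
  { β' | IsConj β β' ∧ ∀ γ : BraidGroup n, IsConj β γ → ell n β' ≤ ell n γ }

/-- The summit set `SS([β])`: conjugates of `β` of maximal infimum. -/
def SS (n : ℕ) (β : BraidGroup n) : Set (BraidGroup n) :=
  { β' | IsConj β β' ∧ ∀ γ : BraidGroup n, IsConj β γ → binf n γ ≤ binf n β' }

/-- The writhe homomorphism, sending each `σ_i` to `1 ∈ ℤ`. -/
noncomputable def writheHom (n : ℕ) : BraidGroup n →* Multiplicative ℤ :=
  PresentedGroup.toGroup (f := fun _ => Multiplicative.ofAdd (1 : ℤ)) (by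
    rintro r (⟨i, j, hij, rfl⟩ | ⟨i, j, hij, rfl⟩) <;>
      (simp [map_mul, map_inv, FreeGroup.lift_apply_of] <;> group))

/-- The writhe (exponent sum) of a braid. -/
noncomputable def writhe (n : ℕ) (β : BraidGroup n) : ℤ :=
  Multiplicative.toAdd (writheHom n β)

namespace S10

noncomputable def x : BraidGroup 3 := sigma 3 1
noncomputable def y : BraidGroup 3 := sigma 3 2

lemma hx : x = PresentedGroup.of (0 : Fin 2) := by simp [x, sigma]
lemma hy : y = PresentedGroup.of (1 : Fin 2) := by simp [y, sigma]

lemma braid_rel : x * y * x = y * x * y := by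
  have h : ((FreeGroup.of (0 : Fin 2)) * FreeGroup.of 1 * FreeGroup.of 0 *
      (FreeGroup.of 1 * FreeGroup.of 0 * FreeGroup.of 1)⁻¹) ∈ braidRels 3 := by
    right; exact ⟨0, 1, rfl, rfl⟩
  have h2 : (QuotientGroup.mk ((FreeGroup.of (0 : Fin 2)) * FreeGroup.of 1 * FreeGroup.of 0 *
      (FreeGroup.of 1 * FreeGroup.of 0 * FreeGroup.of 1)⁻¹) : BraidGroup 3) = 1 := by
    rw [QuotientGroup.eq_one_iff]
    exact Subgroup.subset_normalClosure h
  rw [hx, hy, ← mul_inv_eq_one]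
  exact h2

lemma band12 : band 3 1 2 = x := by simp [band, x, List.range']
lemma band23 : band 3 2 3 = y := by simp [band, y, List.range']
lemma band13 : band 3 1 3 = y * x * y⁻¹ := by simp [band, x, y, List.range']
lemma delta_eq : bdelta 3 = y * x := by simp [bdelta, x, y, List.range']

lemma bands_eq : Bands 3 = {x, y, y * x * y⁻¹} := by
  ext b
  constructor
  · rintro ⟨i, j, h1, h2, h3, rfl⟩
    have hi : i ≤ 2 := by omega
    interval_cases i <;> interval_cases j
    · exact Or.inl band12
    · exact Or.inr (Or.inr band13)
    · exact Or.inr (Or.inl band23)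
  · rintro (rfl | rfl | rfl)
    · exact ⟨1, 2, by norm_num, by norm_num, by norm_num, band12.symm⟩
    · exact ⟨2, 3, by norm_num, by norm_num, by norm_num, band23.symm⟩
    · exact ⟨1, 3, by norm_num, by norm_num, by norm_num, band13.symm⟩

local notation "δ" => bdelta 3

lemma exists_right_compl {c : BraidGroup 3} (hc : c ∈ Bands 3) :
    ∃ d ∈ Bands 3, c * d = δ := by
  rw [bands_eq] at hc
  rcases hc with rfl | rfl | rfl
  · refine ⟨y * x * y⁻¹, by rw [bands_eq]; right; right; rfl, ?_⟩
    rw [delta_eq, show x * (y * x * y⁻¹) = (x * y * x) * y⁻¹ by group, braid_rel]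
    group
  · exact ⟨x, by rw [bands_eq]; left; rfl, by rw [delta_eq]⟩
  · refine ⟨y, by rw [bands_eq]; right; left; rfl, ?_⟩
    rw [delta_eq]; group

lemma exists_left_compl {c : BraidGroup 3} (hc : c ∈ Bands 3) :
    ∃ d ∈ Bands 3, d * c = δ := by
  rw [bands_eq] at hc
  rcases hc with rfl | rfl | rfl
  · exact ⟨y, by rw [bands_eq]; right; left; rfl, by rw [delta_eq]⟩
  · refine ⟨y * x * y⁻¹, by rw [bands_eq]; right; right; rfl, ?_⟩
    rw [delta_eq]; group
  · refine ⟨x, by rw [bands_eq]; left; rfl, ?_⟩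
    rw [delta_eq, show x * (y * x * y⁻¹) = (x * y * x) * y⁻¹ by group, braid_rel]
    group

lemma t1 : δ * x * δ⁻¹ = y * x * y⁻¹ := by rw [delta_eq]; group
lemma t2 : δ * y * δ⁻¹ = x := by
  rw [delta_eq, show y * x * y * (y * x)⁻¹ = (y * x * y) * x⁻¹ * y⁻¹ * (x * x⁻¹) by group,
    ← braid_rel]
  group
lemma t3 : δ * (y * x * y⁻¹) * δ⁻¹ = y := by
  rw [delta_eq, show y * x * (y * x * y⁻¹) * (y * x)⁻¹ = y * (x * y * x) * (y⁻¹ * x⁻¹ * y⁻¹) by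
    group, braid_rel]
  group
lemma ti1 : δ⁻¹ * x * δ = y := by
  rw [delta_eq, show (y * x)⁻¹ * x * (y * x) = x⁻¹ * y⁻¹ * (x * y * x) by group, braid_rel]
  group
lemma ti2 : δ⁻¹ * y * δ = y * x * y⁻¹ := by
  rw [delta_eq, show (y * x)⁻¹ * y * (y * x) = x⁻¹ * y * x by group, ← mul_right_inj x,
    show x * (x⁻¹ * y * x) = y * x by group,
    show x * (y * x * y⁻¹) = (x * y * x) * y⁻¹ by group, braid_rel]
  group
lemma ti3 : δ⁻¹ * (y * x * y⁻¹) * δ = x := by rw [delta_eq]; group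

lemma tau_mem {c : BraidGroup 3} (hc : c ∈ Bands 3) : δ * c * δ⁻¹ ∈ Bands 3 := by
  rw [bands_eq] at hc ⊢
  rcases hc with rfl | rfl | rfl
  · rw [t1]; right; right; rfl
  · rw [t2]; left; rfl
  · rw [t3]; right; left; rfl

lemma tau_inv_mem {c : BraidGroup 3} (hc : c ∈ Bands 3) : δ⁻¹ * c * δ ∈ Bands 3 := by
  rw [bands_eq] at hc ⊢
  rcases hc with rfl | rfl | rfl
  · rw [ti1]; right; left; rfl
  · rw [ti2]; right; right; rfl
  · rw [ti3]; left; rfl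

lemma tau_zpow_mem (t : ℤ) {c : BraidGroup 3} (hc : c ∈ Bands 3) :
    δ ^ t * c * δ ^ (-t) ∈ Bands 3 := by
  induction t using Int.induction_on with
  | zero => simpa using hc
  | succ k ih =>
      have : δ ^ (k + 1 : ℤ) * c * δ ^ (-(k + 1) : ℤ) =
          δ * (δ ^ (k : ℤ) * c * δ ^ (-k : ℤ)) * δ⁻¹ := by
        group
      rw [this]
      exact tau_mem ih
  | pred k ih =>
      have : δ ^ (-k - 1 : ℤ) * c * δ ^ (-(-k - 1) : ℤ) =
          δ⁻¹ * (δ ^ (-k : ℤ) * c * δ ^ (-(-k) : ℤ)) * δ := by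
        group
      rw [this]
      exact tau_inv_mem ih


-- writhe basics
lemma writhe_mul (a b : BraidGroup 3) : writhe 3 (a * b) = writhe 3 a + writhe 3 b := by
  simp [writhe, map_mul]
lemma writhe_inv (a : BraidGroup 3) : writhe 3 a⁻¹ = -writhe 3 a := by
  simp [writhe, map_inv]
lemma writhe_one : writhe 3 (1 : BraidGroup 3) = 0 := by simp [writhe, map_one]
lemma writhe_x : writhe 3 x = 1 := by
  rw [hx]; simp [writhe, writheHom, PresentedGroup.toGroup.of]
lemma writhe_y : writhe 3 y = 1 := by
  rw [hy]; simp [writhe, writheHom, PresentedGroup.toGroup.of]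
lemma writhe_band {c : BraidGroup 3} (hc : c ∈ Bands 3) : writhe 3 c = 1 := by
  rw [bands_eq] at hc
  rcases hc with rfl | rfl | rfl
  · exact writhe_x
  · exact writhe_y
  · rw [writhe_mul, writhe_mul, writhe_inv, writhe_x, writhe_y]; ring
lemma writhe_delta : writhe 3 δ = 2 := by
  rw [delta_eq, writhe_mul, writhe_x, writhe_y]; norm_num
lemma writhe_zpow (t : ℤ) (a : BraidGroup 3) : writhe 3 (a ^ t) = t * writhe 3 a := by
  simp [writhe, map_zpow]
lemma writhe_list {L : List (BraidGroup 3)} (hL : ∀ c ∈ L, c ∈ Bands 3) :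
    writhe 3 L.prod = L.length := by
  induction L with
  | nil => simpa using writhe_one
  | cons c L ih =>
      rw [List.prod_cons, writhe_mul, writhe_band (hL c (by simp)),
        ih fun d hd => hL d (by simp [hd])]
      simp; ring

-- the key predicate: β = δ^t · (product of bands)
def DP (t : ℤ) (β : BraidGroup 3) : Prop :=
  ∃ L : List (BraidGroup 3), (∀ c ∈ L, c ∈ Bands 3) ∧ β = δ ^ t * L.prod

lemma conj_list (u : ℤ) {L : List (BraidGroup 3)} (hL : ∀ c ∈ L, c ∈ Bands 3) :
    ∃ L' : List (BraidGroup 3), (∀ c ∈ L', c ∈ Bands 3) ∧ L'.length = L.length ∧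
      L'.prod = δ ^ u * L.prod * δ ^ (-u) := by
  refine ⟨L.map (fun c => δ ^ u * c * δ ^ (-u)), ?_, by simp, ?_⟩
  · intro c hc
    rcases List.mem_map.1 hc with ⟨d, hd, rfl⟩
    exact tau_zpow_mem u (hL d hd)
  · have : (fun c => δ ^ u * c * δ ^ (-u)) = fun c => (MulAut.conj (δ ^ u)) c := by
      funext c; rw [MulAut.conj_apply, zpow_neg]
    rw [this, ← map_list_prod (MulAut.conj (δ ^ u)) L, MulAut.conj_apply, zpow_neg]

lemma DP_mul {t u : ℤ} {a b : BraidGroup 3} (ha : DP t a) (hb : DP u b) : DP (t + u) (a * b) := by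
  obtain ⟨L, hL, rfl⟩ := ha
  obtain ⟨M, hM, rfl⟩ := hb
  obtain ⟨L', hL', _, hL'p⟩ := conj_list (-u) hL
  refine ⟨L' ++ M, ?_, ?_⟩
  · intro c hc; rcases List.mem_append.1 hc with h | h
    · exact hL' c h
    · exact hM c h
  · rw [List.prod_append, hL'p]
    group

lemma DP_one : DP 0 1 := ⟨[], by simp, by simp⟩
lemma DP_band {c : BraidGroup 3} (hc : c ∈ Bands 3) : DP 0 c := ⟨[c], by simpa using hc, by simp⟩
lemma DP_delta_zpow (t : ℤ) : DP t (δ ^ t) := ⟨[], by simp, by simp⟩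
lemma DP_inv_band {c : BraidGroup 3} (hc : c ∈ Bands 3) : DP (-1) c⁻¹ := by
  obtain ⟨d, hd, hdc⟩ := exists_left_compl hc
  refine ⟨[d], by simpa using hd, ?_⟩
  have : c = d⁻¹ * δ := by rw [← hdc]; group
  rw [this]; simp only [List.prod_cons, List.prod_nil]; group

lemma DP_writhe {t : ℤ} {β : BraidGroup 3} (h : DP t β) :
    ∃ k : ℕ, writhe 3 β = 2 * t + k := by
  obtain ⟨L, hL, rfl⟩ := h
  exact ⟨L.length, by rw [writhe_mul, writhe_zpow, writhe_delta, writhe_list hL]; ring⟩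

lemma DP_list_inv {L : List (BraidGroup 3)} (hL : ∀ c ∈ L, c ∈ Bands 3) :
    DP (-(L.length : ℤ)) L.prod⁻¹ := by
  induction L with
  | nil => simpa using DP_one
  | cons c L ih =>
      have h1 : DP (-(L.length : ℤ)) L.prod⁻¹ := ih fun d hd => hL d (by simp [hd])
      have h2 : DP (-1) c⁻¹ := DP_inv_band (hL c (by simp))
      have h3 := DP_mul h1 h2
      have hcast : (-((c :: L).length : ℤ)) = -(L.length : ℤ) + -1 := by push_cast [List.length_cons]; ring
      rw [List.prod_cons, mul_inv_rev, hcast]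
      exact h3

lemma DP_inv {t : ℤ} {β : BraidGroup 3} (h : DP t β) : ∃ u : ℤ, DP u β⁻¹ := by
  obtain ⟨L, hL, rfl⟩ := h
  have h1 := DP_list_inv hL
  have h2 := DP_delta_zpow (-t)
  have := DP_mul h1 h2
  exact ⟨_, by simpa [mul_inv_rev, zpow_neg] using this⟩

lemma exists_DP (β : BraidGroup 3) : ∃ t, DP t β := by
  have hgen : β ∈ Subgroup.closure (Set.range (PresentedGroup.of (rels := braidRels 3))) := by
    rw [PresentedGroup.closure_range_of]; trivial
  induction hgen using Subgroup.closure_induction with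
  | mem g hg =>
      obtain ⟨i, rfl⟩ := hg
      fin_cases i
      · exact ⟨0, DP_band (by rw [bands_eq]; left; exact hx.symm)⟩
      · exact ⟨0, DP_band (by rw [bands_eq]; right; left; exact hy.symm)⟩
  | one => exact ⟨0, DP_one⟩
  | mul a b _ _ iha ihb =>
      obtain ⟨t, ht⟩ := iha; obtain ⟨u, hu⟩ := ihb
      exact ⟨t + u, DP_mul ht hu⟩
  | inv a _ iha =>
      obtain ⟨t, ht⟩ := iha
      exact DP_inv ht


lemma SQP_list {P : BraidGroup 3} (h : P ∈ SQP 3) :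
    ∃ L : List (BraidGroup 3), (∀ c ∈ L, c ∈ Bands 3) ∧ L.prod = P :=
  Submonoid.exists_list_of_mem_closure h

lemma list_SQP {L : List (BraidGroup 3)} (hL : ∀ c ∈ L, c ∈ Bands 3) : L.prod ∈ SQP 3 :=
  list_prod_mem fun c hc => Submonoid.subset_closure (hL c hc)

lemma bble_delta_iff {t : ℤ} {β : BraidGroup 3} : bble 3 (δ ^ t) β ↔ DP t β := by
  constructor
  · rintro ⟨P, hP, Q, hQ, rfl⟩
    obtain ⟨Lp, hLp, rfl⟩ := SQP_list hP
    obtain ⟨Lq, hLq, rfl⟩ := SQP_list hQ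
    obtain ⟨Lp', hLp', _, hLp'e⟩ := conj_list (-t) hLp
    refine ⟨Lp' ++ Lq, ?_, ?_⟩
    · intro c hc; rcases List.mem_append.1 hc with h | h
      · exact hLp' c h
      · exact hLq c h
    · rw [List.prod_append, hLp'e]
      group
  · rintro ⟨L, hL, rfl⟩
    exact ⟨1, one_mem _, L.prod, list_SQP hL, by group⟩

/-- `δ^k = L.prod * Q` for some positive `Q`, where `k = L.length`. -/
lemma delta_pow_factor {L : List (BraidGroup 3)} (hL : ∀ c ∈ L, c ∈ Bands 3) :
    ∃ Q ∈ SQP 3, δ ^ (L.length : ℤ) = L.prod * Q := by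
  induction L with
  | nil => exact ⟨1, one_mem _, by simp⟩
  | cons c L ih =>
      obtain ⟨Q', hQ', hQ'e⟩ := ih fun d hd => hL d (by simp [hd])
      obtain ⟨d, hd, hcd⟩ := exists_right_compl (hL c (by simp))
      set k : ℤ := (L.length : ℤ)
      have hd1 : δ ^ (-k) * d * δ ^ k ∈ Bands 3 := by
        have := tau_zpow_mem (-k) hd
        simpa using this
      refine ⟨Q' * (δ ^ (-k) * d * δ ^ k), mul_mem hQ' (Submonoid.subset_closure hd1), ?_⟩
      have hlen : ((c :: L).length : ℤ) = 1 + k := by simp [k]; ring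
      have key : c * L.prod * (Q' * (δ ^ (-k) * d * δ ^ k)) = δ ^ (1 + k : ℤ) := by
        have h2 : L.prod * Q' = δ ^ k := hQ'e.symm
        calc c * L.prod * (Q' * (δ ^ (-k) * d * δ ^ k))
            = c * (L.prod * Q') * (δ ^ (-k) * d * δ ^ k) := by group
          _ = c * δ ^ k * (δ ^ (-k) * d * δ ^ k) := by rw [h2]
          _ = c * d * δ ^ k := by group
          _ = δ * δ ^ k := by rw [hcd]
          _ = δ ^ (1 + k : ℤ) := by group
      rw [hlen, List.prod_cons]
      exact key.symm

def infS (β : BraidGroup 3) : Set ℤ := { t : ℤ | bble 3 (δ ^ t) β }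
def supS (β : BraidGroup 3) : Set ℤ := { s : ℤ | bble 3 β (δ ^ s) }

lemma binf_def (β : BraidGroup 3) : binf 3 β = sSup (infS β) := rfl
lemma bsup_def (β : BraidGroup 3) : bsup 3 β = sInf (supS β) := rfl

lemma infS_writhe {β : BraidGroup 3} {t : ℤ} (h : t ∈ infS β) : 2 * t ≤ writhe 3 β := by
  obtain ⟨k, hk⟩ := DP_writhe (bble_delta_iff.1 h)
  omega

lemma infS_nonempty (β : BraidGroup 3) : (infS β).Nonempty := by
  obtain ⟨t, ht⟩ := exists_DP β
  exact ⟨t, bble_delta_iff.2 ht⟩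

lemma infS_bddAbove (β : BraidGroup 3) : BddAbove (infS β) := by
  refine ⟨max 0 (writhe 3 β), fun t ht => ?_⟩
  have := infS_writhe ht
  have h1 := le_max_left (0:ℤ) (writhe 3 β)
  have h2 := le_max_right (0:ℤ) (writhe 3 β)
  omega

lemma binf_mem (β : BraidGroup 3) : binf 3 β ∈ infS β :=
  Int.csSup_mem (infS_nonempty β) (infS_bddAbove β)

lemma infS_le_binf {β : BraidGroup 3} {t : ℤ} (h : t ∈ infS β) : t ≤ binf 3 β :=
  le_csSup (infS_bddAbove β) h

/-- From a sup-witness we get an inf-witness. -/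
lemma supS_to_infS {β : BraidGroup 3} {s : ℤ} (h : s ∈ supS β) :
    writhe 3 β - s ∈ infS β := by
  obtain ⟨P, hP, Q, hQ, hE⟩ := h
  obtain ⟨Lp, hLp, rfl⟩ := SQP_list hP
  obtain ⟨Lq, hLq, rfl⟩ := SQP_list hQ
  -- β = Lp.prod⁻¹ * δ^s * Lq.prod⁻¹
  have hβ : β = Lp.prod⁻¹ * δ ^ s * Lq.prod⁻¹ := by
    rw [hE]; group
  have h1 := DP_list_inv hLp
  have h2 := DP_list_inv hLq
  have h3 := DP_mul (DP_mul h1 (DP_delta_zpow s)) h2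
  rw [← hβ] at h3
  have : -(Lp.length : ℤ) + s + -(Lq.length : ℤ) = writhe 3 β - s := by
    have := congrArg (writhe 3) hE
    rw [writhe_zpow, writhe_delta, writhe_mul, writhe_mul, writhe_list hLp, writhe_list hLq]
      at this
    omega
  rw [this] at h3
  exact bble_delta_iff.2 h3

lemma infS_to_supS {β : BraidGroup 3} {t : ℤ} (h : t ∈ infS β) :
    writhe 3 β - t ∈ supS β := by
  obtain ⟨L, hL, rfl⟩ := bble_delta_iff.1 h
  obtain ⟨Q, hQ, hQe⟩ := delta_pow_factor hL
  have hw : writhe 3 (δ ^ t * L.prod) = 2 * t + L.length := by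
    rw [writhe_mul, writhe_zpow, writhe_delta, writhe_list hL]; ring
  have hkey : δ ^ (writhe 3 (δ ^ t * L.prod) - t) = 1 * (δ ^ t * L.prod) * Q := by
    rw [hw, show (2 * t + (L.length:ℤ) - t) = t + L.length by ring, zpow_add, hQe]
    group
  exact ⟨1, one_mem _, Q, hQ, hkey⟩

lemma supS_nonempty (β : BraidGroup 3) : (supS β).Nonempty := by
  obtain ⟨t, ht⟩ := infS_nonempty β
  exact ⟨_, infS_to_supS ht⟩

lemma supS_bddBelow (β : BraidGroup 3) : BddBelow (supS β) := by
  refine ⟨min 0 (writhe 3 β), fun s hs => ?_⟩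
  have := infS_writhe (supS_to_infS hs)
  have h1 := min_le_left (0:ℤ) (writhe 3 β)
  have h2 := min_le_right (0:ℤ) (writhe 3 β)
  omega

lemma bsup_mem (β : BraidGroup 3) : bsup 3 β ∈ supS β :=
  Int.csInf_mem (supS_nonempty β) (supS_bddBelow β)

lemma bsup_le_supS {β : BraidGroup 3} {s : ℤ} (h : s ∈ supS β) : bsup 3 β ≤ s :=
  csInf_le (supS_bddBelow β) h

lemma writhe_eq_inf_add_sup (β : BraidGroup 3) : writhe 3 β = binf 3 β + bsup 3 β := by
  have h1 : bsup 3 β ≤ writhe 3 β - binf 3 β := bsup_le_supS (infS_to_supS (binf_mem β))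
  have h2 : writhe 3 β - bsup 3 β ≤ binf 3 β := infS_le_binf (supS_to_infS (bsup_mem β))
  omega


lemma band_mem {i j : ℕ} (h1 : 1 ≤ i) (h2 : i < j) (h3 : j ≤ 3) : band 3 i j ∈ Bands 3 :=
  ⟨i, j, h1, h2, h3, rfl⟩

lemma evalLetter_true {l : ℕ × ℕ × Bool} (h : l.2.2 = true) :
    evalLetter 3 l = band 3 l.1 l.2.1 := by rw [evalLetter, if_pos h]

lemma evalLetter_false {l : ℕ × ℕ × Bool} (h : l.2.2 = false) :
    evalLetter 3 l = (band 3 l.1 l.2.1)⁻¹ := by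
  rw [evalLetter, if_neg]; rw [h]; exact Bool.false_ne_true

lemma nbWord_cons (l : ℕ × ℕ × Bool) (W : List (ℕ × ℕ × Bool)) :
    nbWord (l :: W) = (if l.2.2 = true then 0 else 1) + nbWord W := by
  cases h : l.2.2 <;> simp [nbWord, List.filter_cons, h] <;> omega

lemma nbWord_cons_true {l : ℕ × ℕ × Bool} (h : l.2.2 = true) (W : List (ℕ × ℕ × Bool)) :
    nbWord (l :: W) = nbWord W := by rw [nbWord_cons, if_pos h]; omega

lemma nbWord_cons_false {l : ℕ × ℕ × Bool} (h : l.2.2 = false) (W : List (ℕ × ℕ × Bool)) :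
    nbWord (l :: W) = 1 + nbWord W := by
  rw [nbWord_cons, if_neg]; rw [h]; exact Bool.false_ne_true

lemma nbWord_le_length (W : List (ℕ × ℕ × Bool)) : nbWord W ≤ W.length :=
  List.length_filter_le _ _

lemma nbWord_append (W1 W2 : List (ℕ × ℕ × Bool)) :
    nbWord (W1 ++ W2) = nbWord W1 + nbWord W2 := by
  simp [nbWord, List.filter_append]

lemma word_DP {W : List (ℕ × ℕ × Bool)} (hW : IsWord 3 W) :
    DP (-(nbWord W : ℤ)) (W.map (evalLetter 3)).prod := by
  induction W with
  | nil => simpa [nbWord] using DP_one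
  | cons l W ih =>
      have hl := hW l (by simp)
      have hband : band 3 l.1 l.2.1 ∈ Bands 3 := band_mem hl.1 hl.2.1 hl.2.2
      have hrest : DP (-(nbWord W : ℤ)) (W.map (evalLetter 3)).prod :=
        ih fun l' hl' => hW l' (by simp [hl'])
      rw [List.map_cons, List.prod_cons]
      cases h : l.2.2
      · have h1 : DP (-1) (evalLetter 3 l) := by
          rw [evalLetter_false h]; exact DP_inv_band hband
        have h2 := DP_mul h1 hrest
        have hc : (-(nbWord (l :: W) : ℤ)) = -1 + -(nbWord W : ℤ) := by
          rw [nbWord_cons_false h]; push_cast; ring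
        rw [hc]; exact h2
      · have h1 : DP 0 (evalLetter 3 l) := by
          rw [evalLetter_true h]; exact DP_band hband
        have h2 := DP_mul h1 hrest
        have hc : (-(nbWord (l :: W) : ℤ)) = 0 + -(nbWord W : ℤ) := by
          rw [nbWord_cons_true h]; push_cast; ring
        rw [hc]; exact h2

lemma writhe_word {W : List (ℕ × ℕ × Bool)} (hW : IsWord 3 W) :
    writhe 3 (W.map (evalLetter 3)).prod = (W.length : ℤ) - 2 * nbWord W := by
  induction W with
  | nil => simpa [nbWord] using writhe_one
  | cons l W ih =>
      have hl := hW l (by simp)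
      have hband : band 3 l.1 l.2.1 ∈ Bands 3 := band_mem hl.1 hl.2.1 hl.2.2
      have hrest := ih fun l' hl' => hW l' (by simp [hl'])
      rw [List.map_cons, List.prod_cons, writhe_mul, hrest]
      cases h : l.2.2
      · rw [evalLetter_false h, writhe_inv, writhe_band hband, nbWord_cons_false h,
          List.length_cons]
        push_cast; ring
      · rw [evalLetter_true h, writhe_band hband, nbWord_cons_true h, List.length_cons]
        push_cast; ring

lemma Represents_append {W1 W2 : List (ℕ × ℕ × Bool)} {a b : BraidGroup 3}
    (h1 : Represents 3 W1 a) (h2 : Represents 3 W2 b) : Represents 3 (W1 ++ W2) (a * b) := by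
  refine ⟨fun l hl => ?_, ?_⟩
  · rcases List.mem_append.1 hl with h | h
    · exact h1.1 l h
    · exact h2.1 l h
  · rw [List.map_append, List.prod_append, h1.2, h2.2]

lemma posWord {L : List (BraidGroup 3)} (hL : ∀ c ∈ L, c ∈ Bands 3) :
    ∃ W, Represents 3 W L.prod ∧ nbWord W = 0 := by
  induction L with
  | nil => exact ⟨[], ⟨fun l hl => by simp at hl, by simp⟩, by simp [nbWord]⟩
  | cons c L ih =>
      obtain ⟨W', hW', hn'⟩ := ih fun d hd => hL d (by simp [hd])
      obtain ⟨i, j, h1, h2, h3, rfl⟩ := hL c (by simp)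
      refine ⟨(i, j, true) :: W', ⟨fun l hl => ?_, ?_⟩, ?_⟩
      · rcases List.mem_cons.1 hl with rfl | hl
        · exact ⟨h1, h2, h3⟩
        · exact hW'.1 l hl
      · rw [List.map_cons, List.prod_cons, hW'.2, List.prod_cons,
          evalLetter_true (l := (i, j, true)) rfl]
      · rw [nbWord_cons_true (l := (i, j, true)) rfl, hn']

/-- Word construction, case `m ≤ L.length`. -/
lemma word_constr_le (m : ℕ) : ∀ (L : List (BraidGroup 3)), (∀ c ∈ L, c ∈ Bands 3) →
    m ≤ L.length → ∃ W, Represents 3 W (δ ^ (-(m : ℤ)) * L.prod) ∧ nbWord W = m := by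
  induction m with
  | zero =>
      intro L hL _
      obtain ⟨W, hW, hn⟩ := posWord hL
      exact ⟨W, by simpa using hW, hn⟩
  | succ m ih =>
      rintro (_ | ⟨c, L⟩) hL hlen
      · simp at hlen
      · obtain ⟨W', hW', hn'⟩ := ih L (fun d hd => hL d (by simp [hd])) (by simpa using hlen)
        have hc : c ∈ Bands 3 := hL c (by simp)
        obtain ⟨d, hd, hcd⟩ := exists_right_compl hc
        have hd' : δ ^ (-(m:ℤ)) * d * δ ^ (m:ℤ) ∈ Bands 3 := by
          have := tau_zpow_mem (-(m:ℤ)) hd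
          simpa using this
        obtain ⟨i, j, h1, h2, h3, hde⟩ := hd'
        have key : δ ^ (-(m + 1 : ℕ) : ℤ) * (c :: L).prod =
            (δ ^ (-(m:ℤ)) * d * δ ^ (m:ℤ))⁻¹ * (δ ^ (-(m:ℤ)) * L.prod) := by
          have hdc : d⁻¹ = δ⁻¹ * c := by
            rw [← hcd]; group
          rw [List.prod_cons]
          have he : (-(m + 1 : ℕ) : ℤ) = -(m:ℤ) + -1 := by push_cast; ring
          rw [he, mul_inv_rev, mul_inv_rev, hdc]
          group
        refine ⟨(i, j, false) :: W', ⟨fun l hl => ?_, ?_⟩, ?_⟩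
        · rcases List.mem_cons.1 hl with rfl | hl
          · exact ⟨h1, h2, h3⟩
          · exact hW'.1 l hl
        · rw [List.map_cons, List.prod_cons, hW'.2, key,
            evalLetter_false (l := (i, j, false)) rfl, ← hde]
        · rw [nbWord_cons_false (l := (i, j, false)) rfl, hn']
          ring

/-- Prepending `j` copies of `δ⁻¹`, each as two negative letters. -/
lemma word_constr_delta (j : ℕ) : ∀ (γ : BraidGroup 3) (W1 : List (ℕ × ℕ × Bool)),
    Represents 3 W1 γ → ∃ W, Represents 3 W (δ ^ (-(j : ℤ)) * γ) ∧
      nbWord W = 2 * j + nbWord W1 := by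
  induction j with
  | zero => intro γ W1 h; exact ⟨W1, by simpa using h, by ring⟩
  | succ j ih =>
      intro γ W1 h
      obtain ⟨W, hW, hn⟩ := ih γ W1 h
      have hWd : Represents 3 [((1:ℕ), (2:ℕ), false), ((2:ℕ), (3:ℕ), false)] δ⁻¹ := by
        refine ⟨fun l hl => ?_, ?_⟩
        · rcases List.mem_cons.1 hl with rfl | hl
          · exact ⟨by norm_num, by norm_num, by norm_num⟩
          · rcases List.mem_cons.1 hl with rfl | hl
            · exact ⟨by norm_num, by norm_num, by norm_num⟩
            · simp at hl
        · show (evalLetter 3 (1, 2, false)) * ((evalLetter 3 (2, 3, false)) * 1) = δ⁻¹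
          rw [evalLetter_false (l := ((1:ℕ), (2:ℕ), false)) rfl,
            evalLetter_false (l := ((2:ℕ), (3:ℕ), false)) rfl]
          show (band 3 1 2)⁻¹ * ((band 3 2 3)⁻¹ * 1) = δ⁻¹
          rw [band12, band23, delta_eq]
          group
      refine ⟨[((1:ℕ), (2:ℕ), false), ((2:ℕ), (3:ℕ), false)] ++ W, ?_, ?_⟩
      · have hap := Represents_append hWd hW
        have he : δ⁻¹ * (δ ^ (-(j:ℤ)) * γ) = δ ^ (-(j + 1 : ℕ) : ℤ) * γ := by
          have hc : (-(j + 1 : ℕ) : ℤ) = -1 + -(j:ℤ) := by push_cast; ring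
          rw [hc]
          group
        rwa [he] at hap
      · rw [nbWord_append, hn,
          show nbWord [((1:ℕ), (2:ℕ), false), ((2:ℕ), (3:ℕ), false)] = 2 from rfl]
        ring


end S10

/-- for `β ∈ B_3` with `inf(β) ≤ -1`, the bounds of Theorem 9 are
equalities. -/
theorem statement_10 (β : BraidGroup 3) (h : binf 3 β ≤ -1) :
    (binf 3 β < 0 ∧ 0 < bsup 3 β → (nb 3 β : ℤ) = |binf 3 β|) ∧
    (binf 3 β < bsup 3 β ∧ bsup 3 β ≤ 0 →
      (nb 3 β : ℤ) = -writhe 3 β ∧ (nb 3 β : ℤ) = |binf 3 β| + |bsup 3 β|) := by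
  obtain ⟨L, hL, hβ⟩ := S10.bble_delta_iff.1 (S10.binf_mem β)
  have hw : writhe 3 β = 2 * binf 3 β + L.length := by
    conv_lhs => rw [hβ]
    rw [S10.writhe_mul, S10.writhe_zpow, S10.writhe_delta, S10.writhe_list hL]; ring
  have hws := S10.writhe_eq_inf_add_sup β
  have hk : (L.length : ℤ) = bsup 3 β - binf 3 β := by omega
  have lower : ∀ m ∈ {m : ℕ | ∃ W, Represents 3 W β ∧ nbWord W = m},
      -(binf 3 β) ≤ (m : ℤ) ∧ -(writhe 3 β) ≤ (m : ℤ) := by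
    rintro m ⟨W, hWrep, rfl⟩
    constructor
    · have h1 := S10.word_DP hWrep.1
      rw [hWrep.2] at h1
      have h2 := S10.infS_le_binf (S10.bble_delta_iff.2 h1)
      omega
    · have h1 := S10.writhe_word hWrep.1
      rw [hWrep.2] at h1
      have h2 := S10.nbWord_le_length W
      omega
  constructor
  · rintro ⟨h1, h2⟩
    set m₀ : ℕ := (-(binf 3 β)).toNat with hm₀def
    have hm₀ : (m₀ : ℤ) = -(binf 3 β) := Int.toNat_of_nonneg (by omega)
    have hm₀len : m₀ ≤ L.length := by omega
    obtain ⟨W, hWrep, hWn⟩ := S10.word_constr_le m₀ L hL hm₀len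
    have hWβ : Represents 3 W β := by
      have he : (-(m₀ : ℤ)) = binf 3 β := by omega
      rwa [he, ← hβ] at hWrep
    have hmem : m₀ ∈ {m : ℕ | ∃ W, Represents 3 W β ∧ nbWord W = m} := ⟨W, hWβ, hWn⟩
    have hub : nb 3 β ≤ m₀ := Nat.sInf_le hmem
    have hnbmem : nb 3 β ∈ {m : ℕ | ∃ W, Represents 3 W β ∧ nbWord W = m} :=
      Nat.sInf_mem ⟨m₀, hmem⟩
    have hlb := (lower _ hnbmem).1
    rw [abs_of_neg h1]
    omega
  · rintro ⟨h1, h2⟩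
    set k : ℕ := L.length with hkdef
    set m₀ : ℕ := (-(binf 3 β)).toNat with hm₀def
    have hm₀ : (m₀ : ℤ) = -(binf 3 β) := Int.toNat_of_nonneg (by omega)
    have hkm : k ≤ m₀ := by omega
    obtain ⟨W1, hW1rep, hW1n⟩ := S10.word_constr_le k L hL le_rfl
    obtain ⟨W, hWrep, hWn⟩ := S10.word_constr_delta (m₀ - k) _ W1 hW1rep
    have hWβ : Represents 3 W β := by
      have he : bdelta 3 ^ (-((m₀ - k : ℕ) : ℤ)) * (bdelta 3 ^ (-(k : ℤ)) * L.prod) = β := by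
        have hj : ((m₀ - k : ℕ) : ℤ) = -(binf 3 β) - k := by omega
        rw [hβ, hj, ← mul_assoc, ← zpow_add]
        congr 2
        ring
      rwa [he] at hWrep
    have hcount : ((2 * (m₀ - k) + nbWord W1 : ℕ) : ℤ) = -(writhe 3 β) := by
      rw [hW1n]
      omega
    have hmem : (2 * (m₀ - k) + nbWord W1) ∈
        {m : ℕ | ∃ W, Represents 3 W β ∧ nbWord W = m} := ⟨W, hWβ, hWn⟩
    have hub : nb 3 β ≤ 2 * (m₀ - k) + nbWord W1 := Nat.sInf_le hmem
    have hnbmem : nb 3 β ∈ {m : ℕ | ∃ W, Represents 3 W β ∧ nbWord W = m} :=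
      Nat.sInf_mem ⟨_, hmem⟩
    have hlb := (lower _ hnbmem).2
    have hmain : (nb 3 β : ℤ) = -(writhe 3 β) := by omega
    refine ⟨hmain, ?_⟩
    rw [abs_of_neg (by omega : binf 3 β < 0), abs_of_nonpos h2]
    omega
end

section
/- Let n ≥ 3 and β ∈ B_n with left-canonical factorization β = δ^{−r} A_1 ⋯ A_k where r > 0 and k > r (so inf(β) = −r < 0 < sup(β)). Then, as an inequality of rational numbers, nb(β) ≤ (n−1)·r − (r/k)·Σ_{i=1}^{k} ||A_i||. -/
/-! ### Auxiliary development -/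

namespace Stmt11

open List

variable {n : ℕ}

lemma rel_eq_one {r : FreeGroup (Fin (n-1))} (hr : r ∈ braidRels n) :
    (PresentedGroup.mk (braidRels n) r : BraidGroup n) = 1 := by
  change (QuotientGroup.mk r : BraidGroup n) = 1
  rw [QuotientGroup.eq_one_iff]
  exact Subgroup.subset_normalClosure hr

lemma sigma_eq (k : ℕ) (h : k - 1 < n - 1) :
    sigma n k = PresentedGroup.of (⟨k - 1, h⟩ : Fin (n - 1)) := by
  simp [sigma, h]

lemma braid_comm {a b : ℕ} (ha : 1 ≤ a) (hab : a + 1 < b) (hb : b ≤ n - 1) :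
    sigma n a * sigma n b = sigma n b * sigma n a := by
  have ha' : a - 1 < n - 1 := by omega
  have hb' : b - 1 < n - 1 := by omega
  rw [sigma_eq a ha', sigma_eq b hb']
  set i : Fin (n-1) := ⟨a - 1, ha'⟩
  set j : Fin (n-1) := ⟨b - 1, hb'⟩
  have hrel : (FreeGroup.of i * FreeGroup.of j * (FreeGroup.of i)⁻¹ * (FreeGroup.of j)⁻¹)
      ∈ braidRels n := Or.inl ⟨i, j, by simp [i, j]; omega, rfl⟩
  have := rel_eq_one hrel
  simp only [map_mul, map_inv] at this
  have h2 : ∀ x, PresentedGroup.mk (braidRels n) (FreeGroup.of x) = (PresentedGroup.of x : BraidGroup n) := fun _ => rfl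
  rw [h2, h2] at this
  exact commutatorElement_eq_one_iff_mul_comm.mp this

lemma braid_rel {a : ℕ} (ha : 1 ≤ a) (hb : a + 1 ≤ n - 1) :
    sigma n a * sigma n (a+1) * sigma n a = sigma n (a+1) * sigma n a * sigma n (a+1) := by
  have ha' : a - 1 < n - 1 := by omega
  have hb' : (a+1) - 1 < n - 1 := by omega
  rw [sigma_eq a ha', sigma_eq (a+1) hb']
  set i : Fin (n-1) := ⟨a - 1, ha'⟩
  set j : Fin (n-1) := ⟨(a+1) - 1, hb'⟩
  have hrel : (FreeGroup.of i * FreeGroup.of j * FreeGroup.of i *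
      (FreeGroup.of j * FreeGroup.of i * FreeGroup.of j)⁻¹) ∈ braidRels n :=
    Or.inr ⟨i, j, by simp [i, j]; omega, rfl⟩
  have := rel_eq_one hrel
  simp only [map_mul, map_inv] at this
  have h2 : ∀ x, PresentedGroup.mk (braidRels n) (FreeGroup.of x) = (PresentedGroup.of x : BraidGroup n) := fun _ => rfl
  rw [h2, h2] at this
  rw [mul_inv_eq_one] at this
  exact this

/-- `Dl a b = σ_{a+b-1} σ_{a+b-2} ⋯ σ_a`. -/
noncomputable def Dl (n a b : ℕ) : BraidGroup n :=
  ((List.range' a b).reverse.map (sigma n)).prod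

lemma bdelta_eq_Dl : bdelta n = Dl n 1 (n-1) := rfl

lemma Dl_zero (a : ℕ) : Dl n a 0 = 1 := rfl

lemma Dl_succ (a b : ℕ) : Dl n a (b+1) = sigma n (a+b) * Dl n a b := by
  have : List.range' a (b+1) = List.range' a b ++ [a+b] := by
    rw [List.range'_1_concat]
  simp [Dl, this]

lemma Dl_split (a b c : ℕ) : Dl n a (b+c) = Dl n (a+b) c * Dl n a b := by
  induction c with
  | zero => simp [Dl_zero]
  | succ c ih =>
    rw [show b + (c+1) = (b+c)+1 from rfl, Dl_succ, ih, Dl_succ, mul_assoc]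
    congr 2
    omega

lemma commute_sigma_Dl {m a b : ℕ}
    (h : ∀ k, a ≤ k → k < a + b → sigma n m * sigma n k = sigma n k * sigma n m) :
    Commute (sigma n m) (Dl n a b) := by
  apply Commute.list_prod_right
  intro x hx
  simp only [List.mem_map, List.mem_reverse, List.mem_range'_1] at hx
  obtain ⟨k, ⟨hk1, hk2⟩, rfl⟩ := hx
  exact h k hk1 hk2

/-- key commutations we will use repeatedly -/
lemma sigma_comm' {a b : ℕ} (ha : 1 ≤ a) (hab : a + 1 < b ∨ b + 1 < a) (hb : b ≤ n - 1)
    (ha2 : a ≤ n - 1) (hb1 : 1 ≤ b) :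
    sigma n a * sigma n b = sigma n b * sigma n a := by
  rcases hab with h | h
  · exact braid_comm ha h hb
  · exact (braid_comm hb1 h ha2).symm

lemma delta_sigma {m : ℕ} (hm : 2 ≤ m) (hm2 : m ≤ n - 1) :
    bdelta n * sigma n m = sigma n (m-1) * bdelta n := by
  have hsplit : bdelta n = Dl n (m+1) (n-1-m) * (sigma n m * sigma n (m-1)) * Dl n 1 (m-2) := by
    have e0 : Dl n 1 (n-1) = Dl n 1 ((m-2) + (2 + (n-1-m))) := by
      congr 1
      omega
    rw [bdelta_eq_Dl, e0, Dl_split, Dl_split, Dl_succ, Dl_succ, Dl_zero]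
    have e1 : 1 + (m-2) = m - 1 := by omega
    have e2 : m - 1 + (2) = m + 1 := by omega
    have e3 : m - 1 + 1 = m := by omega
    have e4 : m - 1 + 0 = m - 1 := by omega
    rw [e1, e2, e3, e4, mul_one, mul_assoc]
  set U := Dl n (m+1) (n-1-m) with hU
  set V := Dl n 1 (m-2) with hV
  have hVs : Commute (sigma n m) V := by
    apply commute_sigma_Dl
    intro k hk1 hk2
    exact sigma_comm' (by omega) (Or.inr (by omega)) (by omega) hm2 hk1
  have hUs : Commute (sigma n (m-1)) U := by
    apply commute_sigma_Dl
    intro k hk1 hk2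
    exact sigma_comm' (by omega) (Or.inl (by omega)) (by omega) (by omega) (by omega)
  have hbr : sigma n (m-1) * sigma n m * sigma n (m-1) = sigma n m * sigma n (m-1) * sigma n m := by
    have := braid_rel (n := n) (a := m-1) (by omega) (by omega)
    rw [show m - 1 + 1 = m from by omega] at this
    exact this
  calc bdelta n * sigma n m
      = U * (sigma n m * sigma n (m-1)) * V * sigma n m := by rw [hsplit]
    _ = U * (sigma n m * sigma n (m-1) * sigma n m) * V := by
        rw [mul_assoc _ V, ← hVs.eq]; group
    _ = U * (sigma n (m-1) * sigma n m * sigma n (m-1)) * V := by rw [← hbr]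
    _ = sigma n (m-1) * (U * (sigma n m * sigma n (m-1)) * V) := by
        rw [show U * (sigma n (m-1) * sigma n m * sigma n (m-1)) * V
            = (U * sigma n (m-1)) * (sigma n m * sigma n (m-1) * V) from by group,
           ← hUs.eq]; group
    _ = sigma n (m-1) * bdelta n := by rw [← hsplit]

lemma conj_mul' {G : Type*} [Group G] (g x y : G) : g*(x*y)*g⁻¹ = (g*x*g⁻¹)*(g*y*g⁻¹) := by group

lemma conj_inv' {G : Type*} [Group G] (g x : G) : g*x⁻¹*g⁻¹ = (g*x*g⁻¹)⁻¹ := by group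

lemma band_eq (i j : ℕ) : band n i j = Dl n (i+1) (j-1-i) * sigma n i * (Dl n (i+1) (j-1-i))⁻¹ := rfl

lemma delta_conj_Dl {a b : ℕ} (ha : 2 ≤ a) (hab : a + b - 1 ≤ n - 1) :
    bdelta n * Dl n a b * (bdelta n)⁻¹ = Dl n (a-1) b := by
  induction b with
  | zero => simp [Dl_zero]
  | succ b ih =>
    have hab' : a + b ≤ n - 1 := by omega
    rw [Dl_succ, conj_mul', ih (by omega), Dl_succ]
    have h1 : bdelta n * sigma n (a+b) * (bdelta n)⁻¹ = sigma n (a+b-1) := by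
      rw [delta_sigma (by omega) hab']; group
    rw [h1, show a + b - 1 = a - 1 + b from by omega]

lemma T1 {i j : ℕ} (hi : 1 ≤ i) (hij : i < j) (hj : j ≤ n - 1) :
    bdelta n * band n (i+1) (j+1) * (bdelta n)⁻¹ = band n i j := by
  rw [band_eq, band_eq]
  have e : j + 1 - 1 - (i+1) = j - 1 - i := by omega
  rw [e]
  rw [conj_mul', conj_mul', conj_inv']
  have h1 : bdelta n * Dl n (i+1+1) (j-1-i) * (bdelta n)⁻¹ = Dl n (i+1) (j-1-i) := by
    have := delta_conj_Dl (n := n) (a := i+2) (b := j-1-i) (by omega) (by omega)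
    rw [show i+2-1 = i+1 from by omega] at this
    exact this
  have h2 : bdelta n * sigma n (i+1) * (bdelta n)⁻¹ = sigma n i := by
    rw [delta_sigma (by omega) (by omega)]
    rw [show i+1-1 = i from by omega]; group
  rw [h1, h2]

lemma delta_conj_sigma1 (hn : 3 ≤ n) :
    bdelta n * sigma n 1 * (bdelta n)⁻¹ = band n 1 n := by
  have hsplit : bdelta n = Dl n 2 (n-2) * sigma n 1 := by
    have e0 : Dl n 1 (n-1) = Dl n 1 (1 + (n-2)) := by congr 1; omega
    rw [bdelta_eq_Dl, e0, Dl_split, Dl_succ, Dl_zero]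
    norm_num
  rw [band_eq, show n - 1 - 1 = n - 2 from by omega, show (1:ℕ)+1 = 2 from rfl, hsplit]
  group

lemma band_step {m : ℕ} (hm : 1 ≤ m) (hm2 : m ≤ n - 2) :
    sigma n m * band n m n * (sigma n m)⁻¹ = band n (m+1) n := by
  have hW : Dl n (m+1) (n-1-m) = Dl n (m+2) (n-2-m) * sigma n (m+1) := by
    have e0 : Dl n (m+1) (n-1-m) = Dl n (m+1) (1 + (n-2-m)) := by congr 1; omega
    rw [e0, Dl_split, Dl_succ, Dl_zero, show m+1+1 = m+2 from rfl, mul_one,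
       show m+1+0 = m+1 from rfl]
  set W := Dl n (m+2) (n-2-m) with hWdef
  have hcomm : Commute (sigma n m) W := by
    apply commute_sigma_Dl
    intro k hk1 hk2
    exact sigma_comm' hm (Or.inl (by omega)) (by omega) (by omega) (by omega)
  have hbr : sigma n m * sigma n (m+1) * sigma n m = sigma n (m+1) * sigma n m * sigma n (m+1) :=
    braid_rel hm (by omega)
  rw [band_eq, band_eq, hW,
     show n - 1 - (m+1) = n - 2 - m from by omega]
  calc sigma n m * (W * sigma n (m+1) * sigma n m * (W * sigma n (m+1))⁻¹) * (sigma n m)⁻¹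
      = (sigma n m * W) * (sigma n (m+1) * sigma n m * (sigma n (m+1))⁻¹) * (W⁻¹ * (sigma n m)⁻¹) := by
        group
    _ = (W * sigma n m) * (sigma n (m+1) * sigma n m * (sigma n (m+1))⁻¹) * (W⁻¹ * (sigma n m)⁻¹) := by
        rw [hcomm.eq]
    _ = W * (sigma n m * sigma n (m+1) * sigma n m) * (sigma n (m+1))⁻¹ * W⁻¹ * (sigma n m)⁻¹ := by
        group
    _ = W * (sigma n (m+1) * sigma n m * sigma n (m+1)) * (sigma n (m+1))⁻¹ * W⁻¹ * (sigma n m)⁻¹ := by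
        rw [hbr]
    _ = W * sigma n (m+1) * ((sigma n m * W⁻¹) * (sigma n m)⁻¹) := by group
    _ = W * sigma n (m+1) * W⁻¹ := by
        rw [(hcomm.inv_right).eq]; group

lemma T2chain {t : ℕ} (hn : 3 ≤ n) (ht : 1 + t ≤ n - 1) :
    Dl n 1 t * band n 1 n * (Dl n 1 t)⁻¹ = band n (1+t) n := by
  induction t with
  | zero => simp [Dl_zero]
  | succ t ih =>
    rw [Dl_succ]
    calc sigma n (1+t) * Dl n 1 t * band n 1 n * (sigma n (1+t) * Dl n 1 t)⁻¹
        = sigma n (1+t) * (Dl n 1 t * band n 1 n * (Dl n 1 t)⁻¹) * (sigma n (1+t))⁻¹ := by group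
      _ = sigma n (1+t) * band n (1+t) n * (sigma n (1+t))⁻¹ := by rw [ih (by omega)]
      _ = band n (1+t+1) n := band_step (by omega) (by omega)
      _ = band n (1+(t+1)) n := by rw [show 1+t+1 = 1+(t+1) from rfl]

lemma T2 {i : ℕ} (hn : 3 ≤ n) (hi : 1 ≤ i) (hi2 : i ≤ n - 1) :
    bdelta n * band n 1 (i+1) * (bdelta n)⁻¹ = band n i n := by
  rw [band_eq, show i + 1 - 1 - 1 = i - 1 from by omega, show (1:ℕ)+1 = 2 from rfl]
  rw [conj_mul', conj_mul', conj_inv']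
  have h1 : bdelta n * Dl n 2 (i-1) * (bdelta n)⁻¹ = Dl n 1 (i-1) := by
    have := delta_conj_Dl (n := n) (a := 2) (b := i-1) (le_refl 2) (by omega)
    simpa using this
  rw [h1, delta_conj_sigma1 hn]
  have := T2chain (n := n) (t := i - 1) hn (by omega)
  rw [show 1 + (i-1) = i from by omega] at this
  exact this

/-! ### Letters and the twist map -/

/-- The twist `τ⁻¹` on letters. -/
def tw (n : ℕ) (l : ℕ × ℕ × Bool) : ℕ × ℕ × Bool :=
  if l.2.1 = n then (1, l.1 + 1, l.2.2) else (l.1 + 1, l.2.1 + 1, l.2.2)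

/-- A single valid letter. -/
def VL (n : ℕ) (l : ℕ × ℕ × Bool) : Prop := 1 ≤ l.1 ∧ l.1 < l.2.1 ∧ l.2.1 ≤ n

lemma tw_valid {l} (hl : VL n l) : VL n (tw n l) := by
  obtain ⟨h1, h2, h3⟩ := hl
  unfold tw VL
  split <;> simp <;> omega

lemma tw_snd (l) : (tw n l).2.2 = l.2.2 := by unfold tw; split <;> rfl

lemma eval_tw (hn : 3 ≤ n) {l} (hl : VL n l) :
    (bdelta n)⁻¹ * evalLetter n l * bdelta n = evalLetter n (tw n l) := by
  obtain ⟨h1, h2, h3⟩ := hl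
  obtain ⟨i, j, s⟩ := l
  simp only [VL] at h1 h2 h3
  have key : (bdelta n)⁻¹ * band n i j * bdelta n = band n (tw n (i,j,s)).1 (tw n (i,j,s)).2.1 := by
    unfold tw
    by_cases hj : j = n
    · simp only [if_pos hj]
      have := T2 (n := n) (i := i) hn h1 (by omega)
      rw [hj, ← this]; group
    · simp only [if_neg hj]
      have := T1 (n := n) (i := i) (j := j) h1 h2 (by omega)
      rw [← this]; group
  have htws : (tw n (i,j,s)).2.2 = s := tw_snd _
  rcases s with _ | _
  · simp only [evalLetter, htws, Bool.false_eq_true, if_neg, reduceIte]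
    rw [show (bdelta n)⁻¹ * (band n i j)⁻¹ * bdelta n
        = ((bdelta n)⁻¹ * band n i j * bdelta n)⁻¹ from by group, key]
  · simp only [evalLetter, htws, reduceIte]
    exact key

lemma push_one (hn : 3 ≤ n) {W : List (ℕ × ℕ × Bool)} (hW : ∀ l ∈ W, VL n l) :
    (bdelta n)⁻¹ * (W.map (evalLetter n)).prod
      = ((W.map (tw n)).map (evalLetter n)).prod * (bdelta n)⁻¹ := by
  induction W with
  | nil => simp
  | cons l W ih =>
    simp only [List.map_cons, List.prod_cons]
    have h1 : (bdelta n)⁻¹ * evalLetter n l = evalLetter n (tw n l) * (bdelta n)⁻¹ := by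
      rw [← eval_tw hn (hW l (List.mem_cons_self))]; group
    rw [← mul_assoc, h1, mul_assoc, ih (fun x hx => hW x (List.mem_cons_of_mem l hx)),
       ← mul_assoc]

lemma twIter_valid {l} (d : ℕ) (hl : VL n l) : VL n ((tw n)^[d] l) := by
  induction d with
  | zero => exact hl
  | succ d ih => rw [Function.iterate_succ_apply']; exact tw_valid ih

lemma twIter_snd (l) (d : ℕ) : ((tw n)^[d] l).2.2 = l.2.2 := by
  induction d with
  | zero => rfl
  | succ d ih => rw [Function.iterate_succ_apply', tw_snd]; exact ih

lemma push_pow (hn : 3 ≤ n) (d : ℕ) {W : List (ℕ × ℕ × Bool)} (hW : ∀ l ∈ W, VL n l) :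
    ((bdelta n)⁻¹)^d * (W.map (evalLetter n)).prod
      = ((W.map ((tw n)^[d])).map (evalLetter n)).prod * ((bdelta n)⁻¹)^d := by
  induction d with
  | zero => simp
  | succ d ih =>
    have hW' : ∀ l ∈ W.map ((tw n)^[d]), VL n l := by
      intro l hl
      obtain ⟨x, hx, rfl⟩ := List.mem_map.mp hl
      exact twIter_valid d (hW x hx)
    calc ((bdelta n)⁻¹)^(d+1) * (W.map (evalLetter n)).prod
        = (bdelta n)⁻¹ * (((bdelta n)⁻¹)^d * (W.map (evalLetter n)).prod) := by
          rw [pow_succ']; group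
      _ = (bdelta n)⁻¹ * ((W.map ((tw n)^[d])).map (evalLetter n)).prod * ((bdelta n)⁻¹)^d := by
          rw [ih]; group
      _ = ((W.map ((tw n)^[d+1])).map (evalLetter n)).prod * ((bdelta n)⁻¹)^(d+1) := by
          rw [mul_assoc, ← mul_assoc _ _ (((bdelta n)⁻¹)^d), push_one hn hW',
              show (tw n)^[d+1] = tw n ∘ (tw n)^[d] from Function.iterate_succ' _ _,
              ← List.map_map, pow_succ']
          group

/-! ### Writhe computations -/

lemma writhe_mul (x y : BraidGroup n) : writhe n (x*y) = writhe n x + writhe n y := by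
  unfold writhe; rw [map_mul]; rfl

lemma writhe_one : writhe n (1 : BraidGroup n) = 0 := by
  unfold writhe; rw [map_one]; rfl

lemma writhe_inv (x : BraidGroup n) : writhe n x⁻¹ = - writhe n x := by
  unfold writhe; rw [map_inv]; rfl

lemma writhe_sigma {k : ℕ} (h1 : 1 ≤ k) (h2 : k ≤ n - 1) : writhe n (sigma n k) = 1 := by
  have h : k - 1 < n - 1 := by omega
  rw [sigma_eq k h]
  unfold writhe writheHom
  rw [PresentedGroup.toGroup.of]
  rfl

lemma writhe_Dl {a b : ℕ} (ha : 1 ≤ a) (hab : a + b - 1 ≤ n - 1) :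
    writhe n (Dl n a b) = b := by
  induction b with
  | zero => simpa [Dl_zero] using writhe_one
  | succ b ih =>
    rw [Dl_succ, writhe_mul, ih (by omega), writhe_sigma (by omega) (by omega)]
    push_cast; ring

lemma writhe_band {i j : ℕ} (h1 : 1 ≤ i) (h2 : i < j) (h3 : j ≤ n) :
    writhe n (band n i j) = 1 := by
  rw [band_eq, writhe_mul, writhe_mul, writhe_inv,
      writhe_Dl (by omega) (by omega), writhe_sigma h1 (by omega)]
  ring

lemma writhe_delta (hn1 : 1 ≤ n) : writhe n (bdelta n) = (n : ℤ) - 1 := by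
  rw [bdelta_eq_Dl, writhe_Dl (le_refl 1) (by omega)]
  omega

lemma writhe_eval_letter {l} (hl : VL n l) :
    writhe n (evalLetter n l) = if l.2.2 then 1 else -1 := by
  obtain ⟨h1, h2, h3⟩ := hl
  unfold evalLetter
  rcases l with ⟨i, j, _ | _⟩
  · simp only [Bool.false_eq_true, reduceIte]
    rw [writhe_inv, writhe_band h1 h2 h3]
  · simpa using writhe_band h1 h2 h3

lemma writhe_posword {W : List (ℕ × ℕ × Bool)} (hW : ∀ l ∈ W, VL n l)
    (hpos : ∀ l ∈ W, l.2.2 = true) :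
    writhe n ((W.map (evalLetter n)).prod) = W.length := by
  induction W with
  | nil => simpa using writhe_one
  | cons l W ih =>
    simp only [List.map_cons, List.prod_cons, List.length_cons]
    rw [writhe_mul, writhe_eval_letter (hW l (List.mem_cons_self)),
        hpos l (List.mem_cons_self),
        ih (fun x hx => hW x (List.mem_cons_of_mem l hx))
           (fun x hx => hpos x (List.mem_cons_of_mem l hx))]
    simp
    push_cast; ring

/-! ### Positive words for SQP elements -/

lemma sqp_word {X : BraidGroup n} (hX : X ∈ SQP n) :
    ∃ U, Represents n U X ∧ ∀ l ∈ U, l.2.2 = true := by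
  induction hX using Submonoid.closure_induction with
  | mem b hb =>
    obtain ⟨i, j, h1, h2, h3, rfl⟩ := hb
    exact ⟨[(i, j, true)], ⟨by intro l hl; simp at hl; subst hl; exact ⟨h1, h2, h3⟩,
      by simp [evalLetter]⟩, by intro l hl; simp at hl; rw [hl]⟩
  | one => exact ⟨[], ⟨by intro l hl; simp at hl, by simp⟩, by simp⟩
  | mul x y _ _ ihx ihy =>
    obtain ⟨U, ⟨hU1, hU2⟩, hU3⟩ := ihx
    obtain ⟨V, ⟨hV1, hV2⟩, hV3⟩ := ihy
    refine ⟨U ++ V, ⟨?_, ?_⟩, ?_⟩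
    · intro l hl
      rcases List.mem_append.mp hl with h | h
      · exact hU1 l h
      · exact hV1 l h
    · rw [List.map_append, List.prod_append, hU2, hV2]
    · intro l hl
      rcases List.mem_append.mp hl with h | h
      · exact hU3 l h
      · exact hV3 l h

lemma cnfct_sqp {A : BraidGroup n} (hA : A ∈ CnFct n) : A ∈ SQP n := by
  obtain ⟨P, hP, Q, hQ, hPQ⟩ := hA.1
  rw [hPQ, mul_one]
  exact (SQP n).mul_mem hP hQ

lemma posLen_eq_writhe {A : BraidGroup n} (hA : A ∈ SQP n) :
    (posLen n A : ℤ) = writhe n A := by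
  obtain ⟨U, hU, hUpos⟩ := sqp_word hA
  have hw : writhe n A = U.length := by
    rw [← hU.2]; exact writhe_posword hU.1 hUpos
  have hset : {m : ℕ | ∃ W, Represents n W A ∧ (∀ l ∈ W, l.2.2 = true) ∧ W.length = m}
      = {U.length} := by
    ext m
    simp only [Set.mem_setOf_eq, Set.mem_singleton_iff]
    constructor
    · rintro ⟨W, hW, hWpos, rfl⟩
      have : writhe n A = W.length := by rw [← hW.2]; exact writhe_posword hW.1 hWpos
      omega
    · rintro rfl
      exact ⟨U, hU, hUpos, rfl⟩
  rw [posLen, hset, csInf_singleton, hw]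

/-! ### The negative word for `δ⁻¹ A` -/

/-- Inverting a word. -/
def negL (l : ℕ × ℕ × Bool) : ℕ × ℕ × Bool := (l.1, l.2.1, !l.2.2)

lemma eval_negL (l) : evalLetter n (negL l) = (evalLetter n l)⁻¹ := by
  rcases l with ⟨i, j, _ | _⟩ <;> simp [negL, evalLetter]

lemma inv_word (W : List (ℕ × ℕ × Bool)) :
    ((W.map (evalLetter n)).prod)⁻¹ = (((W.reverse.map negL)).map (evalLetter n)).prod := by
  induction W with
  | nil => simp
  | cons l W ih =>
    simp only [List.map_cons, List.prod_cons, List.reverse_cons, List.map_append,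
      List.prod_append, mul_inv_rev, ih]
    simp [eval_negL]

lemma cnfct_negword (hn : 3 ≤ n) {A : BraidGroup n} (hA : A ∈ CnFct n) :
    ∃ N, Represents n N ((bdelta n)⁻¹ * A) ∧ (∀ l ∈ N, l.2.2 = false) ∧
      (N.length : ℤ) = (n : ℤ) - 1 - posLen n A := by
  obtain ⟨P, hP, Q, hQ, hPQ⟩ := hA.2
  obtain ⟨UP, hUP, hUPpos⟩ := sqp_word hP
  obtain ⟨UQ, hUQ, hUQpos⟩ := sqp_word hQ
  -- δ⁻¹ * A = (prod (map tw UP))⁻¹ * Q⁻¹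
  have hA' : (bdelta n)⁻¹ * A = (((UP.map (tw n)).map (evalLetter n)).prod)⁻¹ * Q⁻¹ := by
    have hpush : (bdelta n)⁻¹ * P = ((UP.map (tw n)).map (evalLetter n)).prod * (bdelta n)⁻¹ := by
      rw [← hUP.2]; exact push_one hn hUP.1
    have : A = P⁻¹ * bdelta n * Q⁻¹ := by rw [hPQ]; group
    rw [this]
    have : ((UP.map (tw n)).map (evalLetter n)).prod = (bdelta n)⁻¹ * P * bdelta n := by
      rw [hpush]; group
    rw [this]; group
  set N : List (ℕ × ℕ × Bool) :=
    ((UP.map (tw n)).reverse.map negL) ++ (UQ.reverse.map negL) with hN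
  have hvalid : ∀ l ∈ N, VL n l := by
    intro l hl
    rcases List.mem_append.mp hl with h | h
    · obtain ⟨x, hx, rfl⟩ := List.mem_map.mp h
      obtain ⟨y, hy, rfl⟩ := List.mem_map.mp (List.mem_reverse.mp hx)
      exact tw_valid (hUP.1 y hy)
    · obtain ⟨x, hx, rfl⟩ := List.mem_map.mp h
      exact hUQ.1 x (List.mem_reverse.mp hx)
  refine ⟨N, ⟨hvalid, ?_⟩, ?_, ?_⟩
  · rw [hN, List.map_append, List.prod_append, ← inv_word, ← inv_word, hA', hUQ.2]
  · intro l hl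
    rcases List.mem_append.mp hl with h | h
    · obtain ⟨x, hx, rfl⟩ := List.mem_map.mp h
      obtain ⟨y, hy, rfl⟩ := List.mem_map.mp (List.mem_reverse.mp hx)
      simp [negL, tw_snd, hUPpos y hy]
    · obtain ⟨x, hx, rfl⟩ := List.mem_map.mp h
      simp [negL, hUQpos x (List.mem_reverse.mp hx)]
  · have hlen : (N.length : ℤ) = UP.length + UQ.length := by
      simp [hN]
    have hwP : writhe n P = UP.length := by rw [← hUP.2]; exact writhe_posword hUP.1 hUPpos
    have hwQ : writhe n Q = UQ.length := by rw [← hUQ.2]; exact writhe_posword hUQ.1 hUQpos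
    have hwA : (posLen n A : ℤ) = writhe n A := posLen_eq_writhe (cnfct_sqp hA)
    have hdelta : (n : ℤ) - 1 = writhe n P + writhe n A + writhe n Q := by
      rw [← writhe_delta (n := n) (by omega), hPQ, writhe_mul, writhe_mul]
    omega

/-! ### nbWord helpers -/

lemma nbWord_append (U V : List (ℕ × ℕ × Bool)) : nbWord (U ++ V) = nbWord U + nbWord V := by
  simp [nbWord, List.filter_append]

lemma nbWord_map_twIter (d : ℕ) (W : List (ℕ × ℕ × Bool)) :
    nbWord (W.map ((tw n)^[d])) = nbWord W := by
  unfold nbWord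
  rw [List.filter_map]
  have : (fun l => !l.2.2) ∘ (tw n)^[d] = fun l => !l.2.2 := by
    funext l
    simp [Function.comp, twIter_snd]
  rw [this, List.length_map]

lemma nbWord_pos {W : List (ℕ × ℕ × Bool)} (h : ∀ l ∈ W, l.2.2 = true) : nbWord W = 0 := by
  unfold nbWord
  rw [List.filter_eq_nil_iff.mpr]
  · rfl
  · intro l hl
    simp [h l hl]

lemma nbWord_neg {W : List (ℕ × ℕ × Bool)} (h : ∀ l ∈ W, l.2.2 = false) :
    nbWord W = W.length := by
  unfold nbWord
  rw [List.filter_eq_self.mpr]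
  intro l hl
  simp [h l hl]

/-! ### The main recursive construction -/

lemma rec_word (hn : 3 ≤ n) (A : List (BraidGroup n)) (c : List Bool)
    (hlen : A.length = c.length) (hA : ∀ X ∈ A, X ∈ CnFct n) :
    ∃ W, Represents n W (((bdelta n)⁻¹)^(c.count true) * A.prod) ∧
      (nbWord W : ℤ) = ((A.zip c).map
        (fun p => if p.2 then (n:ℤ) - 1 - posLen n p.1 else 0)).sum := by
  induction A generalizing c with
  | nil =>
    rcases c with _ | ⟨b, c⟩
    · exact ⟨[], ⟨by intro l hl; simp at hl, by simp⟩, by simp [nbWord]⟩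
    · simp at hlen
  | cons X A ih =>
    rcases c with _ | ⟨b, c⟩
    · simp at hlen
    have hlen' : A.length = c.length := by simpa using hlen
    obtain ⟨W', ⟨hW'v, hW'p⟩, hW'nb⟩ := ih c hlen' (fun Y hY => hA Y (List.mem_cons_of_mem X hY))
    set d := c.count true with hd
    rcases b with _ | _
    · -- unmarked: use a positive word for X
      obtain ⟨U, ⟨hUv, hUp⟩, hUpos⟩ := sqp_word (cnfct_sqp (hA X (List.mem_cons_self)))
      set pre := U.map ((tw n)^[d]) with hpre
      have hprev : ∀ l ∈ pre, VL n l := by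
        intro l hl
        obtain ⟨x, hx, rfl⟩ := List.mem_map.mp hl
        exact twIter_valid d (hUv x hx)
      refine ⟨pre ++ W', ⟨?_, ?_⟩, ?_⟩
      · intro l hl
        rcases List.mem_append.mp hl with h | h
        · exact hprev l h
        · exact hW'v l h
      · rw [List.map_append, List.prod_append, hW'p]
        have := push_pow hn d hUv
        rw [hUp] at this
        have hcount : (false :: c).count true = d := by simp [hd]
        rw [hcount, List.prod_cons, show ((bdelta n)⁻¹)^d * (X * A.prod)
            = (((bdelta n)⁻¹)^d * X) * A.prod from by group,
          show ((bdelta n)⁻¹)^d * X = (pre.map (evalLetter n)).prod * ((bdelta n)⁻¹)^d from this]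
        group
      · rw [nbWord_append]
        have h0 : nbWord pre = 0 := by
          rw [hpre, nbWord_map_twIter]
          exact nbWord_pos hUpos
        rw [h0, List.zip_cons_cons, List.map_cons, List.sum_cons]
        simpa using hW'nb
    · -- marked: use the negative word for δ⁻¹ X
      obtain ⟨N, ⟨hNv, hNp⟩, hNneg, hNlen⟩ := cnfct_negword hn (hA X (List.mem_cons_self))
      set pre := N.map ((tw n)^[d]) with hpre
      have hprev : ∀ l ∈ pre, VL n l := by
        intro l hl
        obtain ⟨x, hx, rfl⟩ := List.mem_map.mp hl
        exact twIter_valid d (hNv x hx)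
      refine ⟨pre ++ W', ⟨?_, ?_⟩, ?_⟩
      · intro l hl
        rcases List.mem_append.mp hl with h | h
        · exact hprev l h
        · exact hW'v l h
      · rw [List.map_append, List.prod_append, hW'p]
        have := push_pow hn d hNv
        rw [hNp] at this
        have hcount : (true :: c).count true = d + 1 := by simp [hd]
        rw [hcount, List.prod_cons, show ((bdelta n)⁻¹)^(d+1) * (X * A.prod)
            = (((bdelta n)⁻¹)^d * ((bdelta n)⁻¹ * X)) * A.prod from by rw [pow_succ]; group,
          show ((bdelta n)⁻¹)^d * ((bdelta n)⁻¹ * X)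
            = (pre.map (evalLetter n)).prod * ((bdelta n)⁻¹)^d from this]
        group
      · rw [nbWord_append]
        have h0 : (nbWord pre : ℤ) = (n:ℤ) - 1 - posLen n X := by
          rw [hpre, nbWord_map_twIter, nbWord_neg hNneg]
          exact hNlen
        rw [List.zip_cons_cons, List.map_cons, List.sum_cons]
        simp only [reduceIte]
        push_cast
        rw [h0, hW'nb]

/-! ### Combinatorial selection -/

lemma exists_topset {ι : Type*} [Fintype ι] [DecidableEq ι] (w : ι → ℕ) (r : ℕ)
    (hr : r ≤ Fintype.card ι) :
    ∃ S : Finset ι, S.card = r ∧ ∀ i ∈ S, ∀ j ∉ S, w j ≤ w i := by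
  induction r with
  | zero => exact ⟨∅, rfl, by simp⟩
  | succ r ih =>
    obtain ⟨S, hcard, hinv⟩ := ih (by omega)
    have hne : (Sᶜ : Finset ι).Nonempty := by
      rw [← Finset.card_pos, Finset.card_compl, hcard]; omega
    obtain ⟨j₀, hj₀, hmax⟩ := Finset.exists_max_image Sᶜ w hne
    refine ⟨insert j₀ S, ?_, ?_⟩
    · rw [Finset.card_insert_of_notMem (Finset.mem_compl.mp hj₀), hcard]
    · intro i hi j hj
      have hjS : j ∈ Sᶜ := Finset.mem_compl.mpr (fun h => hj (Finset.mem_insert_of_mem h))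
      rcases Finset.mem_insert.mp hi with rfl | hi
      · exact hmax j hjS
      · exact hinv i hi j (Finset.mem_compl.mp hjS)

lemma topset_avg {ι : Type*} [Fintype ι] [DecidableEq ι] (w : ι → ℕ) (S : Finset ι)
    (hinv : ∀ i ∈ S, ∀ j ∉ S, w j ≤ w i) :
    S.card * (∑ i, w i) ≤ Fintype.card ι * (∑ i ∈ S, w i) := by
  have h1 : S.card * (∑ j ∈ Sᶜ, w j) ≤ Sᶜ.card * (∑ i ∈ S, w i) := by
    calc S.card * (∑ j ∈ Sᶜ, w j) = ∑ j ∈ Sᶜ, S.card * w j := by rw [Finset.mul_sum]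
      _ ≤ ∑ j ∈ Sᶜ, ∑ i ∈ S, w i := by
          apply Finset.sum_le_sum
          intro j hj
          calc S.card * w j = ∑ i ∈ S, w j := by rw [Finset.sum_const, smul_eq_mul]
            _ ≤ ∑ i ∈ S, w i := Finset.sum_le_sum (fun i hi => hinv i hi j (Finset.mem_compl.mp hj))
      _ = Sᶜ.card * (∑ i ∈ S, w i) := by rw [Finset.sum_const, smul_eq_mul]
  have h2 : S.card + Sᶜ.card = Fintype.card ι := by
    rw [Finset.card_compl]
    have := Finset.card_le_univ S
    omega
  calc S.card * (∑ i, w i) = S.card * (∑ i ∈ S, w i) + S.card * (∑ j ∈ Sᶜ, w j) := by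
        rw [← mul_add, Finset.sum_add_sum_compl]
    _ ≤ S.card * (∑ i ∈ S, w i) + Sᶜ.card * (∑ i ∈ S, w i) := by omega
    _ = Fintype.card ι * (∑ i ∈ S, w i) := by rw [← add_mul, h2]

lemma count_true_ofFn {m : ℕ} (f : Fin m → Bool) :
    (List.ofFn f).count true = ∑ i, (if f i then 1 else 0) := by
  induction m with
  | zero => simp
  | succ m ih =>
    rw [List.ofFn_succ, Fin.sum_univ_succ, List.count_cons, ih]
    rcases h : f 0 <;> simp [h] <;> omega

lemma zip_ofFn {α β : Type*} {m : ℕ} (f : Fin m → α) (g : Fin m → β) :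
    (List.ofFn f).zip (List.ofFn g) = List.ofFn (fun i => (f i, g i)) := by
  induction m with
  | zero => simp
  | succ m ih => rw [List.ofFn_succ, List.ofFn_succ, List.zip_cons_cons, ih, List.ofFn_succ]

end Stmt11

/-- if `β = δ^{-r} A_1 ⋯ A_k` is the left-canonical factorization with
`0 < r < k`, then `nb(β) ≤ (n-1)r - (r/k) Σᵢ ‖A_i‖` in `ℚ`. -/
theorem statement_11 (n : ℕ) (hn : 3 ≤ n) (β : BraidGroup n) (r k : ℕ)
    (A : List (BraidGroup n)) (hr : 0 < r) (hk : r < k) (hlen : A.length = k)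
    (hlcf : IsLCF n β (-(r : ℤ)) A) :
    (nb n β : ℚ) ≤ ((n : ℚ) - 1) * r - ((r : ℚ) / k) * ((A.map (posLen n)).sum : ℚ) := by
  classical
  subst hlen
  set k := A.length with hkdef
  -- the weight function
  set w : Fin k → ℕ := fun i => posLen n (A.get i) with hw
  -- select the top-r subset
  obtain ⟨S, hScard, hSinv⟩ := Stmt11.exists_topset w r (by rw [Fintype.card_fin]; omega)
  -- the boolean marking list
  set c : List Bool := List.ofFn (fun i => decide (i ∈ S)) with hc
  have hclen : A.length = c.length := by simp [hc]; rfl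
  have hccount : c.count true = r := by
    rw [hc, Stmt11.count_true_ofFn]
    have : (∑ i : Fin k, if decide (i ∈ S) then 1 else 0)
        = ∑ i : Fin k, if i ∈ S then 1 else 0 := by
      apply Finset.sum_congr rfl
      intro i _
      by_cases h : i ∈ S <;> simp [h]
    rw [this, Finset.sum_boole, Finset.filter_mem_eq_inter, Finset.univ_inter, hScard]
    simp
  -- the word from the recursive construction
  have hAcn : ∀ X ∈ A, X ∈ CnFct n := fun X hX => ((hlcf.2.1) X hX).1
  obtain ⟨W, hWrep, hWnb⟩ := Stmt11.rec_word hn A c hclen hAcn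
  have hβ : (W.map (evalLetter n)).prod = β := by
    rw [hWrep.2, hccount, hlcf.1, zpow_neg, zpow_natCast, inv_pow]
  have hnb : nb n β ≤ nbWord W := Nat.sInf_le ⟨W, ⟨hWrep.1, hβ⟩, rfl⟩
  -- compute the sum
  have hzip : A.zip c = List.ofFn (fun i : Fin k => (A.get i, decide (i ∈ S))) := by
    conv_lhs => rw [← List.ofFn_get A]
    exact Stmt11.zip_ofFn _ _
  have hsum : (nbWord W : ℤ) = r * ((n : ℤ) - 1) - ∑ i ∈ S, (w i : ℤ) := by
    rw [hWnb, hzip, List.map_ofFn, List.sum_ofFn]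
    have : ∀ i : Fin k, ((fun p => if p.2 then (n:ℤ) - 1 - posLen n p.1 else 0) ∘
        (fun i : Fin k => (A.get i, decide (i ∈ S)))) i
        = if i ∈ S then ((n:ℤ) - 1 - w i) else 0 := by
      intro i
      by_cases h : i ∈ S <;> simp [h, hw]
    rw [Finset.sum_congr rfl (fun i _ => this i), Finset.sum_ite_mem, Finset.univ_inter,
        Finset.sum_sub_distrib, Finset.sum_const, hScard]
    push_cast
    ring
  -- the averaging inequality
  have havg : (r : ℕ) * (∑ i, w i) ≤ k * (∑ i ∈ S, w i) := by
    have := Stmt11.topset_avg w S hSinv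
    rw [hScard, Fintype.card_fin] at this
    exact this
  -- total sum identification
  have htot : ((A.map (posLen n)).sum : ℕ) = ∑ i, w i := by
    conv_lhs => rw [← List.ofFn_get A]
    rw [List.map_ofFn, List.sum_ofFn]
    rfl
  -- final arithmetic over ℚ
  have hk0 : (0 : ℚ) < k := by
    have : 0 < k := by omega
    exact_mod_cast this
  have h1 : ((r:ℚ)/k) * ((A.map (posLen n)).sum : ℚ) ≤ (∑ i ∈ S, (w i:ℚ)) := by
    rw [div_mul_eq_mul_div, div_le_iff₀ hk0]
    calc ((r:ℚ)) * ((A.map (posLen n)).sum : ℚ) = ((r * (∑ i, w i) : ℕ) : ℚ) := by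
          rw [htot]; push_cast; ring
      _ ≤ ((k * (∑ i ∈ S, w i) : ℕ) : ℚ) := by exact_mod_cast havg
      _ = (∑ i ∈ S, (w i:ℚ)) * k := by push_cast; ring
  have hnbQ : (nb n β : ℚ) ≤ (nbWord W : ℚ) := by exact_mod_cast hnb
  have hsumQ : (nbWord W : ℚ) = r * ((n:ℚ)-1) - (∑ i ∈ S, (w i:ℚ)) := by
    have := hsum
    push_cast at this ⊢
    exact_mod_cast this
  linarith
end
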